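/- arXiv:2108.02184 — 3 statements merged into one kernel-verified Lean document; each statement's English description precedes it below -/
import Mathlib

section
/- For every integer a ≥ 2 there exists a path v_1, ..., v_n in the a-dimensional hypercube {0,1}^a with length n = 2^a − 2a + 3 such that: v_1 = e_1 = 10^{a-1}, v_n = e_a = 0^{a-1}1, no vertex is visited more than once (the v_i are pairwise distinct), consecutive vertices differ in exactly one coordinate, and every interior vertex v_2, ..., v_{n-1} has weight at least 2. -/
/-- The weight of a hypercube vertex: its number of 1-coordinates. -/
def weight {a : ℕ} (v : Fin a → Bool) : ℕ :=
  (Finset.univ.filter (fun j => v j = true)).card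

/-- Two hypercube vertices are adjacent if they differ in exactly one coordinate. -/
def hammingAdj {a : ℕ} (u v : Fin a → Bool) : Prop :=
  (Finset.univ.filter (fun j => u j ≠ v j)).card = 1

/-!
Induction on the dimension, for paths that end with `1_{a-2,a-1}, e_{a-1}`. Such a path of `Q_a`
without its last vertex is placed in the facet `x_a = 0`; from `1_{a-2,a-1}` it climbs to the facet
`x_a = 1` and runs there to `e_a` along a path of `Q_a` that starts at `1_{a-2,a-1}`, visits every
nonzero vertex except `e_0` and ends with `e_{a-1}, 0` (so `2^a - 1` vertices). In the upper facet
every vertex before `e_a` has weight at least `2`, and the length grows from `2^a - 2a + 3` to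
`2^{a+1} - 2(a+1) + 3`.

That path of `Q_a` comes from the reflected Gray code of `Q_{a-1}`, which runs
`0, e_0, …, 1_{0,a-2}, e_{a-2}`: it descends to the facet `x_{a-1} = 0`, traverses the Gray code
there without its two ends and with coordinates `0` and `a-2` swapped (from `e_{a-2}` to
`1_{0,a-2}`), climbs back and runs the Gray code backwards from `1_{0,a-2}` to `0`.
-/

namespace Hypercube

/-- The vertex `1_S`; elements of `S` that are not coordinates (`≥ a`) are ignored. -/
def ofFinset (a : ℕ) (S : Finset ℕ) : Fin a → Bool := fun j => decide (j.val ∈ S)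

def snoc {a : ℕ} (v : Fin a → Bool) (b : Bool) : Fin (a + 1) → Bool := Fin.snoc v b

def IsPath {a : ℕ} (l : List (Fin a → Bool)) : Prop := l.Nodup ∧ l.IsChain hammingAdj

variable {a : ℕ}

theorem hammingAdj_symm {u v : Fin a → Bool} (h : hammingAdj u v) : hammingAdj v u := by
  simpa only [hammingAdj, ne_comm] using h

theorem hammingAdj_snoc_snoc_iff (u v : Fin a → Bool) (b : Bool) :
    hammingAdj (snoc u b) (snoc v b) ↔ hammingAdj u v := by
  rw [hammingAdj, hammingAdj, Finset.card_filter, Finset.card_filter, Fin.sum_univ_castSucc]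
  simp [snoc]

theorem hammingAdj_snoc_false_true (v : Fin a → Bool) :
    hammingAdj (snoc v false) (snoc v true) := by
  rw [hammingAdj, Finset.card_filter, Fin.sum_univ_castSucc]
  simp [snoc]

theorem hammingAdj_comp_equiv (e : Fin a ≃ Fin a) (u v : Fin a → Bool) :
    hammingAdj (u ∘ e) (v ∘ e) ↔ hammingAdj u v := by
  simp only [hammingAdj, Finset.card_filter, Function.comp_apply]
  rw [e.sum_comp (fun j => if u j ≠ v j then 1 else 0)]

@[simp]
theorem snoc_inj {u v : Fin a → Bool} {b b' : Bool} : snoc u b = snoc v b' ↔ u = v ∧ b = b' :=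
  Fin.snoc_inj

theorem snoc_injective (b : Bool) : Function.Injective (snoc (a := a) · b) :=
  fun _ _ h => (snoc_inj.1 h).1

theorem weight_comp_equiv (e : Fin a ≃ Fin a) (v : Fin a → Bool) : weight (v ∘ e) = weight v := by
  rw [weight, weight, Finset.card_filter, Finset.card_filter]
  exact e.sum_comp (fun j => if v j = true then 1 else 0)

theorem weight_snoc (v : Fin a → Bool) (b : Bool) : weight (snoc v b) = weight v + b.toNat := by
  rw [weight, weight, Finset.card_filter, Finset.card_filter, Fin.sum_univ_castSucc]
  cases b <;> simp [snoc]

theorem weight_pos_iff {v : Fin a → Bool} : 0 < weight v ↔ v ≠ ofFinset a ∅ := by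
  simp [weight, Finset.card_pos, Finset.filter_nonempty_iff, funext_iff, ofFinset]

theorem weight_ofFinset {S : Finset ℕ} (hS : ∀ i ∈ S, i < a) :
    weight (ofFinset a S) = S.card := by
  rw [weight, ← Finset.card_attachFin S hS]
  congr 1
  ext
  simp [ofFinset]

theorem snoc_ofFinset_false {S : Finset ℕ} (hS : a ∉ S) :
    snoc (ofFinset a S) false = ofFinset (a + 1) S := by
  funext j
  induction j using Fin.lastCases <;> simp [snoc, ofFinset, hS]

theorem snoc_ofFinset_true (S : Finset ℕ) :
    snoc (ofFinset a S) true = ofFinset (a + 1) (insert a S) := by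
  funext j
  induction j using Fin.lastCases with
  | last => simp [snoc, ofFinset]
  | cast j => simp [snoc, ofFinset, j.isLt.ne]

theorem ofFinset_comp_swap (i k : Fin a) (S : Finset ℕ) :
    ofFinset a S ∘ Equiv.swap i k = ofFinset a (S.image (Equiv.swap i.val k.val)) := by
  funext j
  simp [ofFinset, Fin.val_injective.swap_apply, Equiv.swap_apply_eq_iff]

theorem hammingAdj_ofFinset_insert {S : Finset ℕ} {k : ℕ} (hk : k < a) (hkS : k ∉ S) :
    hammingAdj (ofFinset a S) (ofFinset a (insert k S)) := by
  rw [hammingAdj, Finset.card_eq_one]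
  refine ⟨⟨k, hk⟩, ?_⟩
  ext j
  by_cases h : j.val = k <;> simp [ofFinset, Fin.ext_iff, h, hkS]

namespace IsPath

variable {l l₁ l₂ : List (Fin a → Bool)}

theorem singleton (v : Fin a → Bool) : IsPath [v] :=
  ⟨List.nodup_singleton v, List.isChain_singleton v⟩

theorem of_infix (h : IsPath l) (h' : l₁ <:+: l) : IsPath l₁ :=
  ⟨h.1.sublist h'.sublist, h.2.infix h'⟩

theorem reverse (h : IsPath l) : IsPath l.reverse :=
  ⟨List.nodup_reverse.2 h.1, List.isChain_reverse.2 (h.2.imp fun _ _ => hammingAdj_symm)⟩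

theorem map_comp_equiv (h : IsPath l) (e : Fin a ≃ Fin a) : IsPath (l.map (· ∘ e)) :=
  ⟨h.1.map fun _ _ h => e.surjective.injective_comp_right h,
    List.isChain_map _ |>.2 (h.2.imp fun u v => (hammingAdj_comp_equiv e u v).2)⟩

theorem map_snoc (h : IsPath l) (b : Bool) : IsPath (l.map (snoc · b)) :=
  ⟨h.1.map (snoc_injective b),
    List.isChain_map _ |>.2 (h.2.imp fun u v => (hammingAdj_snoc_snoc_iff u v b).2)⟩

theorem append (h₁ : IsPath l₁) (h₂ : IsPath l₂) (hd : l₁.Disjoint l₂)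
    (hadj : ∀ x ∈ l₁.getLast?, ∀ y ∈ l₂.head?, hammingAdj x y) : IsPath (l₁ ++ l₂) :=
  ⟨List.nodup_append'.2 ⟨h₁.1, h₂.1, hd⟩, List.isChain_append.2 ⟨h₁.2, h₂.2, hadj⟩⟩

theorem snoc_append_snoc (h₁ : IsPath l₁) (h₂ : IsPath l₂) (hl : l₁.getLast? = l₂.head?) :
    IsPath (l₁.map (snoc · false) ++ l₂.map (snoc · true)) := by
  refine (h₁.map_snoc false).append (h₂.map_snoc true) ?_ ?_
  · simp only [List.disjoint_left, List.mem_map]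
    rintro _ ⟨u, -, rfl⟩ ⟨v, -, h⟩
    simp at h
  · simp only [List.getLast?_map, List.head?_map, hl, Option.mem_def, Option.map_eq_some_iff]
    rintro _ ⟨v, hv, rfl⟩ _ ⟨w, hw, rfl⟩
    obtain rfl : v = w := Option.some_injective _ (hv.symm.trans hw)
    exact hammingAdj_snoc_false_true v

end IsPath

def grayCode : (a : ℕ) → List (Fin a → Bool)
  | 0 => [ofFinset 0 ∅]
  | a + 1 => (grayCode a).map (snoc · false) ++ (grayCode a).reverse.map (snoc · true)

theorem length_grayCode (a : ℕ) : (grayCode a).length = 2 ^ a := by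
  induction a with
  | zero => rfl
  | succ a ih => simp [grayCode, ih, pow_succ, mul_two]

theorem isPath_grayCode (a : ℕ) : IsPath (grayCode a) := by
  induction a with
  | zero => exact IsPath.singleton _
  | succ a ih => exact ih.snoc_append_snoc ih.reverse List.head?_reverse.symm

theorem exists_grayCode_succ_eq (a : ℕ) :
    ∃ t, grayCode (a + 1) = ofFinset (a + 1) ∅ :: ofFinset (a + 1) {0} :: t := by
  induction a with
  | zero =>
    refine ⟨[], ?_⟩
    simp [grayCode, snoc_ofFinset_false, snoc_ofFinset_true]
  | succ a ih =>
    obtain ⟨t, ht⟩ := ih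
    refine ⟨t.map (snoc · false) ++ (grayCode (a + 1)).reverse.map (snoc · true), ?_⟩
    rw [grayCode, ht, List.map_cons, List.map_cons, List.cons_append, List.cons_append,
      snoc_ofFinset_false (Finset.notMem_empty _), snoc_ofFinset_false (by simp)]

theorem exists_grayCode_add_two_eq (c : ℕ) :
    ∃ mid, grayCode (c + 2) = ofFinset (c + 2) ∅ :: ofFinset (c + 2) {0} ::
      (mid ++ [ofFinset (c + 2) {0, c + 1}, ofFinset (c + 2) {c + 1}]) := by
  obtain ⟨t, ht⟩ := exists_grayCode_succ_eq c
  refine ⟨t.map (snoc · false) ++ t.reverse.map (snoc · true), ?_⟩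
  rw [grayCode, ht]
  simp [snoc_ofFinset_false, snoc_ofFinset_true, Finset.pair_comm]

theorem exists_path_avoiding_zero (c : ℕ) :
    ∃ s, IsPath (ofFinset (c + 2) {c, c + 1} :: s ++ [ofFinset (c + 2) {c + 1}]) ∧
      s.length + 4 = 2 ^ (c + 2) ∧ ∀ v ∈ s, 0 < weight v := by
  cases c with
  | zero => exact ⟨[], by unfold IsPath hammingAdj ofFinset; decide, rfl, by simp⟩
  | succ d =>
    obtain ⟨mid, hmid⟩ := exists_grayCode_add_two_eq d
    set Q := ofFinset (d + 2) {0} :: mid ++ [ofFinset (d + 2) {0, d + 1}]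
    have hgray : IsPath ((ofFinset (d + 2) ∅ :: Q) ++ [ofFinset (d + 2) {d + 1}]) := by
      simpa [Q, hmid] using isPath_grayCode (d + 2)
    have hlen : Q.length + 2 = 2 ^ (d + 2) := by
      simpa [Q, hmid] using length_grayCode (d + 2)
    have hzero : ofFinset (d + 2) ∅ ∉ Q := (List.nodup_cons.1 (List.nodup_append'.1 hgray.1).1).1
    have hlast : ofFinset (d + 2) {d + 1} ∉ ofFinset (d + 2) ∅ :: Q :=
      List.disjoint_singleton.1 (List.nodup_append'.1 hgray.1).2.2
    set σ : Fin (d + 2) ≃ Fin (d + 2) := Equiv.swap 0 (Fin.last (d + 1))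
    have hbottom : IsPath (Q.map (· ∘ σ)) :=
      (hgray.of_infix ⟨[ofFinset (d + 2) ∅], [ofFinset (d + 2) {d + 1}], rfl⟩).map_comp_equiv σ
    have htop : IsPath (ofFinset (d + 2) ∅ :: Q).reverse :=
      (hgray.of_infix (List.prefix_append _ _).isInfix).reverse
    have hpath := (IsPath.singleton (snoc (ofFinset (d + 2) {d + 1}) true)).append
      (hbottom.snoc_append_snoc htop
        (by simp [Q, σ, List.getLast?_cons, ofFinset_comp_swap, Finset.pair_comm]))
      (by simpa [and_comm] using hlast)
      (by simpa [Q, σ, ofFinset_comp_swap] using hammingAdj_symm (hammingAdj_snoc_false_true _))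
    refine ⟨(Q.map (· ∘ σ)).map (snoc · false) ++ Q.reverse.map (snoc · true), ?_, ?_, ?_⟩
    · convert hpath using 1
      simp [snoc_ofFinset_true, Finset.pair_comm]
    · simp only [List.length_append, List.length_map, List.length_reverse]
      rw [pow_succ]
      omega
    · simp only [List.mem_append, List.map_map, List.mem_map, Function.comp_apply]
      rintro v (⟨x, hx, rfl⟩ | ⟨x, -, rfl⟩)
      · rw [weight_snoc, weight_comp_equiv, Bool.toNat_false, Nat.add_zero, weight_pos_iff]
        exact ne_of_mem_of_not_mem hx hzero
      · simp [weight_snoc]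

theorem exists_heavy_path (c : ℕ) :
    ∃ m, IsPath (ofFinset (c + 2) {0} :: m ++ [ofFinset (c + 2) {c, c + 1}]) ∧
      m.length + 2 * (c + 2) = 2 ^ (c + 2) ∧ ∀ v ∈ m, 2 ≤ weight v := by
  induction c with
  | zero => exact ⟨[], by unfold IsPath hammingAdj ofFinset; decide, rfl, by simp⟩
  | succ c ih =>
    obtain ⟨m, hm, hmlen, hmw⟩ := ih
    obtain ⟨s, hs, hslen, hsw⟩ := exists_path_avoiding_zero c
    have hx : weight (ofFinset (c + 2) {c, c + 1}) = 2 := by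
      rw [weight_ofFinset (by simp), Finset.card_pair (by omega)]
    refine ⟨m.map (snoc · false) ++ snoc (ofFinset (c + 2) {c, c + 1}) false ::
      snoc (ofFinset (c + 2) {c, c + 1}) true :: s.map (snoc · true), ?_, ?_, ?_⟩
    · convert hm.snoc_append_snoc hs (by simp [List.getLast?_cons]) using 1
      simp [snoc_ofFinset_false, snoc_ofFinset_true, Finset.pair_comm]
    · simp only [List.length_append, List.length_map, List.length_cons]
      rw [pow_succ]
      omega
    · simp only [List.mem_append, List.mem_cons, List.mem_map]
      rintro v (⟨u, hu, rfl⟩ | rfl | rfl | ⟨u, hu, rfl⟩) <;> simp only [weight_snoc]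
      · exact hmw u hu
      · simp [hx]
      · simp [hx]
      · exact Nat.succ_le_succ (hsw u hu)

theorem exists_flag_path (c : ℕ) :
    ∃ m, IsPath (ofFinset (c + 2) {0} :: m ++ [ofFinset (c + 2) {c + 1}]) ∧
      m.length + 2 * (c + 2) = 2 ^ (c + 2) + 1 ∧ ∀ v ∈ m, 2 ≤ weight v := by
  obtain ⟨m, hm, hmlen, hmw⟩ := exists_heavy_path c
  have hx : weight (ofFinset (c + 2) {c, c + 1}) = 2 := by
    rw [weight_ofFinset (by simp), Finset.card_pair (by omega)]
  have he : weight (ofFinset (c + 2) {c + 1}) = 1 := by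
    rw [weight_ofFinset (by simp), Finset.card_singleton]
  refine ⟨m ++ [ofFinset (c + 2) {c, c + 1}], ?_, by simpa using by omega, ?_⟩
  · refine hm.append (IsPath.singleton _) ?_ ?_
    · simp only [List.disjoint_singleton, List.mem_append, List.mem_cons]
      rintro ((h | h) | h | h)
      · simpa [ofFinset] using congrFun h 0
      · simpa [he] using hmw _ h
      · simp [h, hx] at he
      · simp at h
    · simpa [List.getLast?_cons] using
        hammingAdj_symm (hammingAdj_ofFinset_insert (S := {c + 1}) (k := c) (by omega) (by simp))
  · simp only [List.mem_append, List.mem_singleton]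
    rintro v (hv | rfl)
    exacts [hmw v hv, hx.ge]

end Hypercube

open Hypercube

/-- **Lemma 2, flag sequences.**  For every `a ≥ 2` there is a path
`v 0, v 1, …, v (n-1)` of length `n = 2^a - 2a + 3` in the `a`-dimensional hypercube with
pairwise distinct vertices, starting at `e_1 = 10^(a-1)`, ending at `e_a = 0^(a-1)1`,
consecutive vertices differing in exactly one coordinate, and all interior vertices of
weight at least `2`. -/
theorem flag_sequence_exists (a : ℕ) (ha : 2 ≤ a) :
    ∃ (n : ℕ) (v : ℕ → (Fin a → Bool)),
      n = 2 ^ a - 2 * a + 3 ∧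
      (∀ i j, i < n → j < n → v i = v j → i = j) ∧
      v 0 = (fun j => decide (j.val = 0)) ∧
      v (n - 1) = (fun j => decide (j.val = a - 1)) ∧
      (∀ i, i + 1 < n → hammingAdj (v i) (v (i + 1))) ∧
      (∀ i, 0 < i → i + 1 < n → 2 ≤ weight (v i)) := by
  obtain ⟨c, rfl⟩ : ∃ c, a = c + 2 := ⟨a - 2, by omega⟩
  obtain ⟨m, hpath, hlen, hweight⟩ := exists_flag_path c
  set L := ofFinset (c + 2) {0} :: m ++ [ofFinset (c + 2) {c + 1}]
  have hL : L.length = m.length + 2 := by simp [L]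
  refine ⟨L.length, fun i => L.getD i (ofFinset _ ∅), by rw [hL, pow_succ] at *; omega,
    ?_, ?_, ?_, ?_, ?_⟩
  · intro i j hi hj hij
    dsimp only at hij
    rw [List.getD_eq_getElem _ _ hi, List.getD_eq_getElem _ _ hj] at hij
    exact hpath.1.getElem_inj_iff.1 hij
  · funext j
    simp [L, ofFinset]
  · funext j
    simp [L, ofFinset]
  · intro i hi
    dsimp only
    rw [List.getD_eq_getElem _ _ hi, List.getD_eq_getElem _ _ (Nat.lt_of_succ_lt hi)]
    exact List.isChain_iff_getElem.1 hpath.2 i hi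
  · rintro (_ | k) hk0 hk
    · omega
    · dsimp only
      rw [List.getD_eq_getElem _ _ (Nat.lt_of_succ_lt hk)]
      simp only [L, List.cons_append, List.getElem_cons_succ]
      rw [List.getElem_append_left (by omega)]
      exact hweight _ (List.getElem_mem _)
end

section
/- For every integer a ≥ 2, the length 2^a − 2a + 3 in Lemma 2 is maximal: if v_1, ..., v_n is any sequence of pairwise distinct Boolean vectors in {0,1}^a with n ≥ 2, such that consecutive vectors differ in exactly one coordinate, the endpoints v_1 and v_n each have weight exactly 1, and all interior vertices v_2, ..., v_{n-1} have weight at least 2, then n ≤ 2^a − 2a + 3. -/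
open Finset

section

variable {a : ℕ}

lemma weight_le (w : Fin a → Bool) : weight w ≤ a :=
  (card_filter_le _ _).trans (card_univ.trans (Fintype.card_fin a)).le

lemma weight_add_weight (u w : Fin a → Bool) :
    weight u + weight w =
      2 * #{j | u j = true ∧ w j = true} + #{j | u j ≠ w j} := by
  simp only [weight, card_filter, ← sum_add_distrib, mul_sum]
  refine sum_congr rfl fun j _ => ?_
  cases u j <;> cases w j <;> rfl

lemma odd_weight_add_weight_of_hammingAdj {u w : Fin a → Bool} (h : hammingAdj u w) :
    Odd (weight u + weight w) := by
  rw [hammingAdj] at h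
  rw [weight_add_weight, h]
  exact odd_two_mul_add_one _

lemma hammingAdj_update_not (w : Fin a → Bool) (i : Fin a) :
    hammingAdj w (Function.update w i (!w i)) := by
  have : ({j | w j ≠ Function.update w i (!w i) j} : Finset (Fin a)) = {i} := by
    ext j
    by_cases hj : j = i <;> simp [hj]
  rw [hammingAdj, this, card_singleton]

lemma card_odd_weight (ha : 0 < a) : #{w : Fin a → Bool | Odd (weight w)} = 2 ^ (a - 1) := by
  let flip (w : Fin a → Bool) := Function.update w ⟨0, ha⟩ (!w ⟨0, ha⟩)
  have flip_flip (w) : flip (flip w) = w := by simp [flip]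
  have odd_flip (w) : Odd (weight (flip w)) ↔ Even (weight w) := by
    rw [← Nat.odd_add']
    exact odd_weight_add_weight_of_hammingAdj (hammingAdj_update_not w _)
  have hswap : #{w : Fin a → Bool | Odd (weight w)} = #{w : Fin a → Bool | ¬Odd (weight w)} :=
    card_nbij' flip flip
      (fun w hw => by
        simp only [coe_filter, mem_univ, true_and, Set.mem_ofPred_eq] at hw ⊢
        rwa [odd_flip, Nat.not_even_iff_odd])
      (fun w hw => by
        simp only [coe_filter, mem_univ, true_and, Set.mem_ofPred_eq] at hw ⊢
        rwa [odd_flip, ← Nat.not_odd_iff_even])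
      (fun w _ => flip_flip w) (fun w _ => flip_flip w)
  have htotal : #{w : Fin a → Bool | Odd (weight w)} + #{w : Fin a → Bool | ¬Odd (weight w)}
      = 2 ^ a := by
    rw [card_filter_add_card_filter_not, card_univ]
    simp
  have hpow : 2 ^ a = 2 ^ (a - 1) * 2 := by rw [← pow_succ, Nat.sub_add_cancel ha]
  omega

lemma weight_eq_one_iff {w : Fin a → Bool} :
    weight w = 1 ↔ ∃ i, w = fun j => decide (j = i) := by
  rw [weight, card_eq_one]
  refine exists_congr fun i => ⟨fun h => funext fun j => ?_, fun h => ?_⟩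
  · have := Finset.ext_iff.mp h j
    cases hj : w j <;> simpa [hj] using this
  · ext j; simp [h]

lemma card_weight_eq_one : #{w : Fin a → Bool | weight w = 1} = a := by
  have : ({w | weight w = 1} : Finset (Fin a → Bool)) = univ.image fun i j => decide (j = i) := by
    ext w; simp [weight_eq_one_iff, eq_comm]
  rw [this, card_image_of_injective, card_univ, Fintype.card_fin]
  intro i i' h
  simpa using congrFun h i

lemma card_odd_weight_ne_one (ha : 0 < a) :
    #{w : Fin a → Bool | Odd (weight w) ∧ weight w ≠ 1} = 2 ^ (a - 1) - a := by
  rw [filter_and_not, card_sdiff_of_subset, card_odd_weight ha, card_weight_eq_one]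
  exact monotone_filter_right _ fun w _ h => h ▸ odd_one

section Path

variable {n : ℕ} {v : ℕ → Fin a → Bool}

lemma weight_add_index_mod_two (hadj : ∀ i, i + 1 < n → hammingAdj (v i) (v (i + 1)))
    {i : ℕ} (hi : i < n) : (weight (v i) + i) % 2 = weight (v 0) % 2 := by
  induction i with
  | zero => rfl
  | succ k ih =>
    have hstep := Nat.odd_iff.mp (odd_weight_add_weight_of_hammingAdj (hadj k hi))
    have := ih (by omega)
    omega

lemma odd_length_of_weight_eq_one (hadj : ∀ i, i + 1 < n → hammingAdj (v i) (v (i + 1)))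
    (hstart : weight (v 0) = 1) (hend : weight (v (n - 1)) = 1) (hn : 0 < n) : Odd n := by
  have := weight_add_index_mod_two hadj (i := n - 1) (by omega)
  rw [hstart, hend] at this
  rw [Nat.odd_iff]
  omega

lemma sub_three_div_two_le_card (hinj : ∀ i j, i < n → j < n → v i = v j → i = j)
    (hadj : ∀ i, i + 1 < n → hammingAdj (v i) (v (i + 1))) (hstart : Odd (weight (v 0)))
    (hint : ∀ i, 0 < i → i + 1 < n → 2 ≤ weight (v i)) :
    (n - 3) / 2 ≤ #{w : Fin a → Bool | Odd (weight w) ∧ weight w ≠ 1} := by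
  have hrange (i) (hi : i ∈ (range ((n - 3) / 2) : Set ℕ)) : 2 * i + 2 + 1 < n := by
    rw [coe_range, Set.mem_Iio] at hi
    omega
  have hmaps : Set.MapsTo (fun i => v (2 * i + 2)) (range ((n - 3) / 2))
      ↑({w | Odd (weight w) ∧ weight w ≠ 1} : Finset (Fin a → Bool)) := fun i hi => by
    have hpar := weight_add_index_mod_two hadj (hrange i hi).le
    have hheavy := hint _ (by omega) (hrange i hi)
    rw [Nat.odd_iff] at hstart
    simp only [coe_filter, mem_univ, true_and, Set.mem_ofPred_eq, Nat.odd_iff]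
    omega
  have hinjOn : Set.InjOn (fun i => v (2 * i + 2)) (range ((n - 3) / 2)) :=
    fun i hi j hj hij => by
      have := hinj _ _ (hrange i hi).le (hrange j hj).le hij
      omega
  simpa using card_le_card_of_injOn _ hmaps hinjOn

end Path

end

theorem flag_sequence_maximal_general (a : ℕ) (n : ℕ)
    (v : ℕ → (Fin a → Bool))
    (hinj : ∀ i j, i < n → j < n → v i = v j → i = j)
    (hadj : ∀ i, i + 1 < n → hammingAdj (v i) (v (i + 1)))
    (hstart : weight (v 0) = 1)
    (hend : weight (v (n - 1)) = 1)
    (hint : ∀ i, 0 < i → i + 1 < n → 2 ≤ weight (v i)) :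
    n ≤ 2 ^ a - 2 * a + 3 := by
  have ha : 0 < a := by have := weight_le (v 0); omega
  rcases n.eq_zero_or_pos with rfl | hn
  · exact Nat.zero_le _
  have hodd := Nat.odd_iff.mp (odd_length_of_weight_eq_one hadj hstart hend hn)
  have hcount := sub_three_div_two_le_card hinj hadj (hstart ▸ odd_one) hint
  rw [card_odd_weight_ne_one ha] at hcount
  have hpow : 2 ^ a = 2 * 2 ^ (a - 1) := by rw [← pow_succ', Nat.sub_add_cancel ha]
  omega

/-- **maximality of Lemma 2.**  For `a ≥ 2`, any self-avoiding path
`v 0, …, v (n-1)` (with `n ≥ 2`) in the `a`-dimensional hypercube whose consecutive vertices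
differ in exactly one coordinate, whose two endpoints have weight exactly `1`, and all of
whose interior vertices have weight at least `2`, has length `n ≤ 2^a - 2a + 3`. -/
theorem flag_sequence_maximal (a : ℕ) (ha : 2 ≤ a) (n : ℕ) (hn : 2 ≤ n)
    (v : ℕ → (Fin a → Bool))
    (hinj : ∀ i j, i < n → j < n → v i = v j → i = j)
    (hadj : ∀ i, i + 1 < n → hammingAdj (v i) (v (i + 1)))
    (hstart : weight (v 0) = 1)
    (hend : weight (v (n - 1)) = 1)
    (hint : ∀ i, 0 < i → i + 1 < n → 2 ≤ weight (v i)) :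
    n ≤ 2 ^ a - 2 * a + 3 :=
  flag_sequence_maximal_general a n v hinj hadj hstart hend hint
end

section
/- Let d ≥ 2 and w = 2^d, and let the pairs P_i ⊆ {1, ..., w} for i ∈ {1, ..., w/2} be defined by P_i = {i, w/2 + 2i − 1} if 1 ≤ i ≤ w/4 and P_i = {i, 2i} if w/4 < i ≤ w/2. For 1 ≤ k ≤ d and 0 ≤ j < 2^k, let I_{k,j} = {j·2^{d−k} + 1, ..., (j+1)·2^{d−k}} and let T_{k,j} = { i ∈ {1, ..., w/2} : |P_i ∩ I_{k,j}| = 1 }. Then |T_{k,j}| = 2^{d−k} for every such k and j; in particular, for k = 1 every one of the w/2 checks is triggered, and for k ≤ d − 1 at least two checks are triggered. -/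
/-! Write `P_i = {i, partner w i}`. For `4 ∣ w` the partner map is a bijection from the checks
`[1, w/2]` onto the upper half `[w/2 + 1, w]` of the leaves (the first quarter of the checks
onto the odd leaves, the second quarter onto the even ones). A dyadic interval `I_{k,j}` with
`k ≥ 1` lies inside one half. If it lies in the lower half, `P_i` meets it in one point exactly
when `i ∈ I_{k,j}`, so `T_{k,j} = I_{k,j}`; if it lies in the upper half, exactly when the
partner of `i` is in `I_{k,j}`, so the partner map is a bijection `T_{k,j} → I_{k,j}`. -/

/-- The two-qubit parity-check pair `P_i ⊆ {1, …, w}`: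
`P_i = {i, w/2 + 2i - 1}` if `1 ≤ i ≤ w/4`, and `P_i = {i, 2i}` if `w/4 < i ≤ w/2`. -/
def pairP (w i : ℕ) : Finset ℕ :=
  if i ≤ w / 4 then {i, w / 2 + 2 * i - 1} else {i, 2 * i}

/-- The interval of leaves `I_{k,j} = {j·2^(d-k) + 1, …, (j+1)·2^(d-k)}` affected by an
`X` fault at the `j`-th node of depth `k` in the binary tree. -/
def intervalI (d k j : ℕ) : Finset ℕ :=
  Finset.Icc (j * 2 ^ (d - k) + 1) ((j + 1) * 2 ^ (d - k))

/-- `T_{k,j}`: the set of parity checks `i ∈ {1, …, w/2}` triggered by the fault at node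
`(k, j)`, i.e. those whose pair `P_i` meets the interval `I_{k,j}` in exactly one element. -/
def triggered (w d k j : ℕ) : Finset ℕ :=
  (Finset.Icc 1 (w / 2)).filter (fun i => (pairP w i ∩ intervalI d k j).card = 1)

lemma Finset.card_pair_inter_eq_one_iff_of_notMem_right {α : Type*} [DecidableEq α] {a b : α}
    {s : Finset α} (hb : b ∉ s) : ({a, b} ∩ s).card = 1 ↔ a ∈ s := by
  by_cases ha : a ∈ s <;>
    simp [Finset.insert_inter_of_mem, Finset.insert_inter_of_notMem, ha, hb]

lemma Finset.card_pair_inter_eq_one_iff_of_notMem_left {α : Type*} [DecidableEq α] {a b : α}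
    {s : Finset α} (ha : a ∉ s) : ({a, b} ∩ s).card = 1 ↔ b ∈ s := by
  rw [Finset.pair_comm, Finset.card_pair_inter_eq_one_iff_of_notMem_right ha]

lemma Finset.card_filter_mem_eq_of_bijOn {α β : Type*} [DecidableEq β] {f : α → β}
    {A : Finset α} {B I : Finset β} (hf : Set.BijOn f A B) (hI : I ⊆ B) :
    (A.filter (fun a => f a ∈ I)).card = I.card := by
  refine Finset.card_nbij f (fun a ha => (Finset.mem_filter.mp ha).2) ?_ ?_
  · exact hf.injOn.mono (Finset.coe_subset.mpr (Finset.filter_subset _ _))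
  · intro b hb
    obtain ⟨a, ha, rfl⟩ := hf.surjOn (hI hb)
    exact ⟨a, Finset.mem_filter.mpr ⟨ha, hb⟩, rfl⟩

def partner (w i : ℕ) : ℕ :=
  if i ≤ w / 4 then w / 2 + 2 * i - 1 else 2 * i

lemma pairP_eq (w i : ℕ) : pairP w i = {i, partner w i} := by
  unfold pairP partner
  split_ifs <;> rfl

lemma partner_bijOn {w : ℕ} (hw : 4 ∣ w) :
    Set.BijOn (partner w) (Finset.Icc 1 (w / 2)) (Finset.Icc (w / 2 + 1) w) := by
  obtain ⟨q, rfl⟩ := hw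
  have hq : 4 * q / 4 = q ∧ 4 * q / 2 = 2 * q := by omega
  refine ⟨fun i hi => ?_, fun i hi i' hi' h => ?_, fun m hm => ?_⟩ <;>
    simp only [partner, hq, Finset.coe_Icc, Set.mem_Icc, Set.mem_image] at *
  · split_ifs <;> omega
  · split_ifs at h <;> omega
  · rcases Nat.even_or_odd m with ⟨r, hr⟩ | ⟨r, hr⟩
    · exact ⟨r, ⟨by omega, by omega⟩, by split_ifs <;> omega⟩
    · exact ⟨r + 1 - q, ⟨by omega, by omega⟩, by split_ifs <;> omega⟩

lemma triggered_eq_filter_partner (w d k j : ℕ) :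
    triggered w d k j = (Finset.Icc 1 (w / 2)).filter
      (fun i => ({i, partner w i} ∩ intervalI d k j).card = 1) := by
  simp only [triggered, pairP_eq]

lemma triggered_eq_intervalI {w d k j : ℕ} (hw : 4 ∣ w)
    (hI : intervalI d k j ⊆ Finset.Icc 1 (w / 2)) : triggered w d k j = intervalI d k j := by
  rw [triggered_eq_filter_partner]
  calc _ = (Finset.Icc 1 (w / 2)).filter (· ∈ intervalI d k j) := by
        refine Finset.filter_congr fun i hi => ?_
        refine Finset.card_pair_inter_eq_one_iff_of_notMem_right fun h => ?_
        have := Finset.mem_Icc.mp (hI h)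
        have := Finset.mem_Icc.mp ((partner_bijOn hw).mapsTo hi)
        omega
    _ = intervalI d k j := by rw [Finset.filter_mem_eq_inter, Finset.inter_eq_right.mpr hI]

lemma card_triggered_eq_card_intervalI {w d k j : ℕ} (hw : 4 ∣ w)
    (hI : intervalI d k j ⊆ Finset.Icc (w / 2 + 1) w) :
    (triggered w d k j).card = (intervalI d k j).card := by
  rw [triggered_eq_filter_partner, ← Finset.card_filter_mem_eq_of_bijOn (partner_bijOn hw) hI]
  congr 1
  refine Finset.filter_congr fun i hi => ?_
  refine Finset.card_pair_inter_eq_one_iff_of_notMem_left fun h => ?_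
  have := Finset.mem_Icc.mp (hI h)
  have := Finset.mem_Icc.mp hi
  omega

lemma card_intervalI (d k j : ℕ) : (intervalI d k j).card = 2 ^ (d - k) := by
  rw [intervalI, Nat.card_Icc, add_one_mul, Nat.add_sub_add_right, Nat.add_sub_cancel_left]

lemma intervalI_subset_lower_or_upper {d k j : ℕ} (hk1 : 1 ≤ k) (hk : k ≤ d) (hj : j < 2 ^ k) :
    intervalI d k j ⊆ Finset.Icc 1 (2 ^ d / 2) ∨
      intervalI d k j ⊆ Finset.Icc (2 ^ d / 2 + 1) (2 ^ d) := by
  obtain ⟨k, rfl⟩ := Nat.exists_eq_add_of_le' hk1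
  have hd : 2 ^ d = 2 ^ k * 2 ^ (d - (k + 1)) * 2 := by
    rw [mul_right_comm, ← pow_succ, ← pow_add]; congr 1; omega
  rw [pow_succ] at hj
  rw [intervalI, hd, Nat.mul_div_cancel _ two_pos]
  rcases lt_or_ge j (2 ^ k) with h | h
  · left; exact Finset.Icc_subset_Icc (by omega) (by gcongr; omega)
  · right
    refine Finset.Icc_subset_Icc (by gcongr) ?_
    rw [mul_right_comm]; gcongr; omega

/-- For `d ≥ 2`, `w = 2^d`, `1 ≤ k ≤ d` and `j < 2^k`, exactly `2^(d-k)`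
parity checks are triggered; in particular for `k = 1` all `w/2` checks are triggered, and
for `k ≤ d - 1` at least two checks are triggered. -/
theorem triggered_card (d : ℕ) (hd : 2 ≤ d) (w : ℕ) (hw : w = 2 ^ d)
    (k j : ℕ) (hk1 : 1 ≤ k) (hk2 : k ≤ d) (hj : j < 2 ^ k) :
    (triggered w d k j).card = 2 ^ (d - k) ∧
    (k = 1 → triggered w d k j = Finset.Icc 1 (w / 2)) ∧
    (k ≤ d - 1 → 2 ≤ (triggered w d k j).card) := by
  have h4 : 4 ∣ w := hw ▸ Nat.pow_dvd_pow 2 hd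
  have hcard : (triggered w d k j).card = 2 ^ (d - k) := by
    rw [← card_intervalI d k j]
    rcases hw ▸ intervalI_subset_lower_or_upper hk1 hk2 hj with hI | hI
    · rw [triggered_eq_intervalI h4 hI]
    · exact card_triggered_eq_card_intervalI h4 hI
  refine ⟨hcard, fun hk => ?_, fun hk => ?_⟩
  · refine Finset.eq_of_subset_of_card_le (Finset.filter_subset _ _) ?_
    have hhalf : 2 ^ d = 2 * 2 ^ (d - 1) := by rw [← pow_succ']; congr 1; omega
    rw [hcard, Nat.card_Icc, hw, hk]
    omega
  · calc 2 = 2 ^ 1 := rfl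
      _ ≤ 2 ^ (d - k) := Nat.pow_le_pow_right two_pos (by omega)
      _ = (triggered w d k j).card := hcard.symm
end
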